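/- Let z₀ ∈ ℂ \ {0} and κ₁ ∈ ℂ, and set κ₂ = −(z₀⁶ − 15κ₁z₀³ − 45κ₁²)/(45z₀) and κ₃ = −(z₀⁹ − 189κ₁²z₀³ − 189κ₁³)/(189z₀²). Then z₀ is a root of multiplicity at least 3 of the Adler–Moser polynomial Θ₄(z) with parameters (κ₁,κ₂,κ₃): Θ₄(z₀) = 0, Θ₄′(z₀) = 0 and Θ₄″(z₀) = 0. -/

import Mathlib

open Complex

/-!
Once the denominators `45 z₀` and `189 z₀²` are cleared, the choice of `κ₂, κ₃` becomes two
polynomial relations, and `z₀²·Θ₄(z₀)`, `z₀·Θ₄′(z₀)`, `z₀·Θ₄″(z₀)` are explicit combinations of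
them. `Θ₄′(z₀)` and `Θ₄″(z₀)` are linear in `(κ₂, κ₃)`, and these values of `κ₂, κ₃` solve the
two linear equations; that the quadratic condition `Θ₄(z₀) = 0` then also holds is the real
content.
-/

/-- The Adler–Moser polynomial
`Θ₄(z) = z¹⁰ − 45κ₁z⁷ + 315κ₂z⁵ − 1575κ₃z³ + 4725κ₁κ₂z² − 4725κ₁³z − 4725κ₂² + 4725κ₁κ₃`
as a function of `z`. -/
noncomputable def theta4 (κ₁ κ₂ κ₃ : ℂ) : ℂ → ℂ := fun z =>
  z ^ 10 - 45 * κ₁ * z ^ 7 + 315 * κ₂ * z ^ 5 - 1575 * κ₃ * z ^ 3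
    + 4725 * κ₁ * κ₂ * z ^ 2 - 4725 * κ₁ ^ 3 * z - 4725 * κ₂ ^ 2 + 4725 * κ₁ * κ₃

section Derivatives

variable (κ₁ κ₂ κ₃ : ℂ)

lemma hasDerivAt_theta4 (z : ℂ) :
    HasDerivAt (theta4 κ₁ κ₂ κ₃)
      (10 * z ^ 9 - 315 * κ₁ * z ^ 6 + 1575 * κ₂ * z ^ 4 - 4725 * κ₃ * z ^ 2
        + 9450 * κ₁ * κ₂ * z - 4725 * κ₁ ^ 3) z := by
  refine (((((((((hasDerivAt_pow 10 z).sub ((hasDerivAt_pow 7 z).const_mul (45 * κ₁))).add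
    ((hasDerivAt_pow 5 z).const_mul (315 * κ₂))).sub
    ((hasDerivAt_pow 3 z).const_mul (1575 * κ₃))).add
    ((hasDerivAt_pow 2 z).const_mul (4725 * κ₁ * κ₂))).sub
    ((hasDerivAt_id z).const_mul (4725 * κ₁ ^ 3))).sub_const (4725 * κ₂ ^ 2)).add_const
    (4725 * κ₁ * κ₃))).congr_deriv ?_
  norm_num
  ring

lemma deriv_theta4 :
    deriv (theta4 κ₁ κ₂ κ₃) = fun z =>
      10 * z ^ 9 - 315 * κ₁ * z ^ 6 + 1575 * κ₂ * z ^ 4 - 4725 * κ₃ * z ^ 2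
        + 9450 * κ₁ * κ₂ * z - 4725 * κ₁ ^ 3 :=
  funext fun z => (hasDerivAt_theta4 κ₁ κ₂ κ₃ z).deriv

lemma iteratedDeriv_two_theta4 (z : ℂ) :
    iteratedDeriv 2 (theta4 κ₁ κ₂ κ₃) z =
      90 * z ^ 8 - 1890 * κ₁ * z ^ 5 + 6300 * κ₂ * z ^ 3 - 9450 * κ₃ * z + 9450 * κ₁ * κ₂ := by
  rw [iteratedDeriv_succ, iteratedDeriv_one, deriv_theta4]
  refine (((((((hasDerivAt_pow 9 z).const_mul 10).sub
    ((hasDerivAt_pow 6 z).const_mul (315 * κ₁))).add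
    ((hasDerivAt_pow 4 z).const_mul (1575 * κ₂))).sub
    ((hasDerivAt_pow 2 z).const_mul (4725 * κ₃))).add
    ((hasDerivAt_id z).const_mul (9450 * κ₁ * κ₂))).sub_const (4725 * κ₁ ^ 3)).deriv.trans ?_
  norm_num
  ring

end Derivatives

section Relations

variable {κ₁ κ₂ κ₃ z : ℂ}

lemma sq_mul_theta4_eq_zero (h₂ : 45 * z * κ₂ = 45 * κ₁ ^ 2 + 15 * κ₁ * z ^ 3 - z ^ 6)
    (h₃ : 189 * z ^ 2 * κ₃ = 189 * κ₁ ^ 3 + 189 * κ₁ ^ 2 * z ^ 3 - z ^ 9) :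
    z ^ 2 * theta4 κ₁ κ₂ κ₃ z = 0 := by
  unfold theta4
  -- the `κ₂²` term is handled by `(45zκ₂)² - A² = (45zκ₂ - A)(45zκ₂ + A)`, `A` the right side of `h₂`
  linear_combination (7 * z ^ 6 + 105 * κ₁ * z ^ 3 - 7 / 3 * (45 * z * κ₂ + 45 * κ₁ ^ 2
    + 15 * κ₁ * z ^ 3 - z ^ 6)) * h₂ + (25 * κ₁ - 25 / 3 * z ^ 3) * h₃

lemma mul_deriv_theta4_eq_zero (h₂ : 45 * z * κ₂ = 45 * κ₁ ^ 2 + 15 * κ₁ * z ^ 3 - z ^ 6)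
    (h₃ : 189 * z ^ 2 * κ₃ = 189 * κ₁ ^ 3 + 189 * κ₁ ^ 2 * z ^ 3 - z ^ 9) :
    z * deriv (theta4 κ₁ κ₂ κ₃) z = 0 := by
  rw [deriv_theta4]
  linear_combination (35 * z ^ 4 + 210 * κ₁ * z) * h₂ - 25 * z * h₃

lemma mul_iteratedDeriv_two_theta4_eq_zero
    (h₂ : 45 * z * κ₂ = 45 * κ₁ ^ 2 + 15 * κ₁ * z ^ 3 - z ^ 6)
    (h₃ : 189 * z ^ 2 * κ₃ = 189 * κ₁ ^ 3 + 189 * κ₁ ^ 2 * z ^ 3 - z ^ 9) :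
    z * iteratedDeriv 2 (theta4 κ₁ κ₂ κ₃) z = 0 := by
  rw [iteratedDeriv_two_theta4]
  linear_combination (140 * z ^ 3 + 210 * κ₁) * h₂ - 50 * h₃

end Relations

/-- **For `z₀ ≠ 0` and the choice of `κ₂, κ₃` of Eq. (2.21), `z₀` is a root of
multiplicity at least 3 of `Θ₄`:** `Θ₄(z₀) = Θ₄′(z₀) = Θ₄″(z₀) = 0`. -/
theorem theta4_triple_root (z₀ : ℂ) (hz₀ : z₀ ≠ 0) (κ₁ κ₂ κ₃ : ℂ)
    (hκ₂ : κ₂ = -(z₀ ^ 6 - 15 * κ₁ * z₀ ^ 3 - 45 * κ₁ ^ 2) / (45 * z₀))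
    (hκ₃ : κ₃ = -(z₀ ^ 9 - 189 * κ₁ ^ 2 * z₀ ^ 3 - 189 * κ₁ ^ 3) / (189 * z₀ ^ 2)) :
    theta4 κ₁ κ₂ κ₃ z₀ = 0 ∧ deriv (theta4 κ₁ κ₂ κ₃) z₀ = 0 ∧
      iteratedDeriv 2 (theta4 κ₁ κ₂ κ₃) z₀ = 0 := by
  have h₂ : 45 * z₀ * κ₂ = 45 * κ₁ ^ 2 + 15 * κ₁ * z₀ ^ 3 - z₀ ^ 6 := by
    rw [hκ₂]; field_simp; ring
  have h₃ : 189 * z₀ ^ 2 * κ₃ = 189 * κ₁ ^ 3 + 189 * κ₁ ^ 2 * z₀ ^ 3 - z₀ ^ 9 := by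
    rw [hκ₃]; field_simp; ring
  exact ⟨(mul_eq_zero.mp (sq_mul_theta4_eq_zero h₂ h₃)).resolve_left (pow_ne_zero 2 hz₀),
    (mul_eq_zero.mp (mul_deriv_theta4_eq_zero h₂ h₃)).resolve_left hz₀,
    (mul_eq_zero.mp (mul_iteratedDeriv_two_theta4_eq_zero h₂ h₃)).resolve_left hz₀⟩
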